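/- Fix an integer k ≥ 1 and let M_{2k} denote the R-module (R × R)/⟨(V^k, Q)⟩, the quotient of R² by the cyclic submodule generated by (V^k, Q). Then for every R-module M: (1) Tor_n^R(M, M_{2k}) = 0 for all n ≥ 2; and (2) Tor_1^R(M, M_{2k}) is isomorphic, as an F-vector space, to the submodule {x ∈ M : V^k·x = 0 and Q·x = 0} of M. -/

import Mathlib

open Polynomial CategoryTheory

noncomputable section

/-- The field `F = ℤ/2ℤ`. -/
abbrev Fld := ZMod 2

/-- The polynomial ring `F[[V]][Q]` (polynomials in `Q` over the power series ring `F[[V]]`). -/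
abbrev Rpoly := Polynomial (PowerSeries Fld)

/-- The ring `R = F[[V]][Q]/(Q³)`. -/
abbrev Rring := Rpoly ⧸ Ideal.span ({(X : Rpoly) ^ 3} : Set Rpoly)

/-- `Q`, the image in `R` of the polynomial variable. -/
def Qe : Rring := Ideal.Quotient.mk (Ideal.span ({(X : Rpoly) ^ 3} : Set Rpoly)) (X : Rpoly)

/-- `V`, the image in `R` of the power series variable. -/
def Ve : Rring := Ideal.Quotient.mk (Ideal.span ({(X : Rpoly) ^ 3} : Set Rpoly)) (C PowerSeries.X)
/-- Scalars commute with themselves: needed to form `R`-scalar multiples of linear maps. -/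
instance (M : Type) [AddCommGroup M] [Module Rring M] : SMulCommClass Rring Rring M :=
  smulCommClass_self Rring M

/-- The `R`-module `M_{2k} = (R × R)/⟨(V^k, Q)⟩`. -/
abbrev M2k (k : ℕ) :=
  (Rring × Rring) ⧸ Submodule.span Rring ({(Ve ^ k, Qe)} : Set (Rring × Rring))

/-- The ring structure on `R` coming from its commutative ring structure (needed so that the
monoidal structure on `ModuleCat R` is found). -/
instance Rring.instRingOfCommRing : Ring Rring := CommRing.toRing

/-!
The module `M_{2k}` has the projective resolution `0 → R → R² → M_{2k} → 0`, the first map being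
`r ↦ (r V^k, r Q)`. It is injective: if `r Q = 0` then `r = Q² t`, and `r V^k = 0` then means
`Q ∣ t V^k` in `F[[V]][Q]`, so `Q ∣ t` because `V^k` is a nonzero constant, and `r = 0`.
Tensoring the resolution with `M` gives `0 → M → M² → 0`, `m ↦ (V^k m, Q m)`, so `Tor` vanishes
in degrees `≥ 2` and `Tor₁` is the kernel of this map.
-/

open Limits ZeroObject MonoidalCategory TensorProduct

namespace CategoryTheory

variable {C : Type*} [Category* C] [Abelian C] {S : ShortComplex C}

def ShortComplex.lengthOneComplex (S : ShortComplex C) : ChainComplex C ℕ where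
  X
  | 0 => S.X₂
  | 1 => S.X₁
  | _ + 2 => 0
  d
  | 1, 0 => S.f
  | _, _ => 0
  shape
  | 1, 0, h => absurd rfl h
  | 0, _, _ | 1, _ + 1, _ | _ + 2, _, _ => rfl
  d_comp_d' := by
    rintro _ _ k rfl rfl
    exact zero_comp

lemma ShortComplex.isZero_lengthOneComplex_X (S : ShortComplex C) (n : ℕ) :
    IsZero (S.lengthOneComplex.X (n + 2)) :=
  isZero_zero C

def ShortComplex.lengthOneComplexπ (S : ShortComplex C) :
    S.lengthOneComplex ⟶ (ChainComplex.single₀ C).obj S.X₃ :=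
  (ChainComplex.toSingle₀Equiv _ _).symm ⟨S.g, S.zero⟩

lemma ShortComplex.ShortExact.quasiIso_lengthOneComplexπ (hS : S.ShortExact) :
    _root_.QuasiIso S.lengthOneComplexπ where
  quasiIsoAt
  | 0 => by
    rw [ChainComplex.quasiIsoAt₀_iff, ShortComplex.quasiIso_iff_of_zeros' _ rfl rfl rfl]
    have hπ : S.lengthOneComplexπ.f 0 = S.g :=
      ChainComplex.toSingle₀Equiv_symm_apply_f_zero _ _
    change (ShortComplex.mk S.f (S.lengthOneComplexπ.f 0) _).Exact ∧
      Epi (S.lengthOneComplexπ.f 0)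
    simp only [hπ]
    exact ⟨hS.exact, hS.epi_g⟩
  | 1 => by
    rw [quasiIsoAt_iff_exactAt' (hL := ChainComplex.exactAt_succ_single_obj ..),
      HomologicalComplex.exactAt_iff' _ 2 1 0 (by simp) (by simp)]
    exact (ShortComplex.exact_iff_mono _ rfl).2 hS.mono_f
  | n + 2 => by
    rw [quasiIsoAt_iff_exactAt' (hL := ChainComplex.exactAt_succ_single_obj ..),
      HomologicalComplex.exactAt_iff]
    exact ShortComplex.exact_of_isZero_X₂ _ (S.isZero_lengthOneComplex_X n)

def ShortComplex.ShortExact.projectiveResolution (hS : S.ShortExact)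
    [Projective S.X₁] [Projective S.X₂] : ProjectiveResolution S.X₃ where
  complex := S.lengthOneComplex
  projective
  | 0 => inferInstanceAs (Projective S.X₂)
  | 1 => inferInstanceAs (Projective S.X₁)
  | n + 2 => (S.isZero_lengthOneComplex_X n).projective
  π := S.lengthOneComplexπ
  quasiIso := hS.quasiIso_lengthOneComplexπ

variable [HasProjectiveResolutions C] [Projective S.X₁] [Projective S.X₂]
  {D : Type*} [Category* D] [Abelian D] (F : C ⥤ D) [F.Additive]

lemma Functor.isZero_leftDerived_obj_of_shortExact (hS : S.ShortExact) (n : ℕ) :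
    IsZero ((F.leftDerived (n + 2)).obj S.X₃) :=
  IsZero.of_iso (ShortComplex.isZero_homology_of_isZero_X₂ _
      (F.map_isZero (S.isZero_lengthOneComplex_X n)))
    (hS.projectiveResolution.isoLeftDerivedObj F (n + 2))

def Functor.leftDerivedOneIsoKernelOfShortExact (hS : S.ShortExact) :
    (F.leftDerived 1).obj S.X₃ ≅ Limits.kernel (F.map S.f) :=
  let K := (F.mapHomologicalComplex _).obj hS.projectiveResolution.complex
  hS.projectiveResolution.isoLeftDerivedObj F 1 ≪≫ K.homologyIsoSc' 2 1 0 (by simp) (by simp) ≪≫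
    ((K.sc' 2 1 0).asIsoHomologyπ (F.map_zero _ _)).symm ≪≫ (K.sc' 2 1 0).cyclesIsoKernel

end CategoryTheory

section TorOfQuotient

universe u

variable {R : Type u} [CommRing R] {P₁ P₀ : Type u} [AddCommGroup P₁] [Module R P₁]
  [AddCommGroup P₀] [Module R P₀] {f : P₁ →ₗ[R] P₀} {N : Submodule R P₀}

lemma LinearMap.shortExact_of_range_eq (hf : Function.Injective f)
    (hN : LinearMap.range f = N) :
    (ModuleCat.shortComplexOfCompEqZero f N.mkQ (by ext; simp [← hN])).ShortExact :=
  ModuleCat.shortComplex_shortExact _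
    (LinearMap.exact_iff.2 (by simpa using hN.symm)) hf N.mkQ_surjective

variable [Module.Projective R P₁] [Module.Projective R P₀]
  (M : Type u) [AddCommGroup M] [Module R M]

lemma subsingleton_tor_quotient_of_range_eq (hf : Function.Injective f)
    (hN : LinearMap.range f = N) (n : ℕ) :
    Subsingleton (((Tor (ModuleCat R) (n + 2)).obj (ModuleCat.of R M)).obj
      (ModuleCat.of R (P₀ ⧸ N))) :=
  ModuleCat.subsingleton_of_isZero
    (((tensoringLeft _).obj (ModuleCat.of R M)).isZero_leftDerived_obj_of_shortExact
      (LinearMap.shortExact_of_range_eq hf hN) n)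

def torOneQuotientEquivKerLTensor (hf : Function.Injective f) (hN : LinearMap.range f = N) :
    ((Tor (ModuleCat R) 1).obj (ModuleCat.of R M)).obj (ModuleCat.of R (P₀ ⧸ N)) ≃ₗ[R]
      LinearMap.ker (f.lTensor M) :=
  ((((tensoringLeft _).obj (ModuleCat.of R M)).leftDerivedOneIsoKernelOfShortExact
    (LinearMap.shortExact_of_range_eq hf hN)) ≪≫ ModuleCat.kernelIsoKer _).toLinearEquiv

end TorOfQuotient

section TensorKernel

variable {R : Type*} [CommRing R] (M : Type*) [AddCommGroup M] [Module R M] (a b : R)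

def LinearMap.kerLTensorToSpanSingletonEquiv :
    LinearMap.ker ((LinearMap.toSpanSingleton R (R × R) (a, b)).lTensor M) ≃ₗ[R]
      LinearMap.ker ((a • LinearMap.id : M →ₗ[R] M).prod (b • LinearMap.id)) :=
  let eR : M ⊗[R] R ≃ₗ[R] M := TensorProduct.rid R M
  let eRR : M ⊗[R] (R × R) ≃ₗ[R] M × M :=
    (TensorProduct.prodRight R R M R R).trans (eR.prodCongr eR)
  have hcomm : eRR.toLinearMap ∘ₗ (LinearMap.toSpanSingleton R (R × R) (a, b)).lTensor M =
      ((a • LinearMap.id : M →ₗ[R] M).prod (b • LinearMap.id)) ∘ₗ eR.toLinearMap := by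
    refine TensorProduct.ext' fun m r => ?_
    simp [eRR, eR, smul_smul, mul_comm]
  eR.ofSubmodules _ _ (by
    rw [Submodule.map_equiv_eq_comap_symm, ← LinearMap.ker_comp, ← eRR.ker_comp,
      ← LinearMap.comp_assoc, hcomm, LinearMap.comp_assoc]
    simp)

end TensorKernel

lemma Polynomial.X_pow_dvd_of_dvd_mul_X_of_dvd_mul_C {A : Type*} [CommRing A] [IsDomain A]
    {n : ℕ} {p : A[X]} {c : A} (hc : c ≠ 0) (hX : X ^ n ∣ p * X) (hC : X ^ n ∣ p * C c) :
    X ^ n ∣ p := by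
  cases n with
  | zero => exact one_dvd p
  | succ m =>
    obtain ⟨t, rfl⟩ : X ^ m ∣ p := by
      rwa [pow_succ, mul_dvd_mul_iff_right X_ne_zero] at hX
    rw [pow_succ, mul_assoc, mul_dvd_mul_iff_left (pow_ne_zero m X_ne_zero), X_dvd_iff,
      coeff_mul_C, mul_eq_zero] at hC
    exact pow_succ (X : A[X]) m ▸ mul_dvd_mul_left _ (X_dvd_iff.2 (hC.resolve_right hc))

lemma injective_toSpanSingleton_Ve_pow_Qe (k : ℕ) :
    Function.Injective (LinearMap.toSpanSingleton Rring (Rring × Rring) (Ve ^ k, Qe)) := by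
  rw [injective_iff_map_eq_zero]
  intro a ha
  obtain ⟨p, rfl⟩ := Ideal.Quotient.mk_surjective a
  simp only [LinearMap.toSpanSingleton_apply, Prod.smul_mk, smul_eq_mul, Prod.mk_eq_zero, Ve, Qe,
    ← map_pow, ← map_mul, Ideal.Quotient.eq_zero_iff_mem, Ideal.mem_span_singleton] at ha ⊢
  exact X_pow_dvd_of_dvd_mul_X_of_dvd_mul_C (pow_ne_zero k PowerSeries.X_ne_zero) ha.2 ha.1

theorem stmt15_general (k : ℕ) (M : Type) [AddCommGroup M] [Module Rring M] :
    (∀ n : ℕ, 2 ≤ n →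
      Subsingleton
        (((Tor (ModuleCat Rring) n).obj (ModuleCat.of Rring M)).obj
          (ModuleCat.of Rring (M2k k)))) ∧
    Nonempty
      ((((Tor (ModuleCat Rring) 1).obj (ModuleCat.of Rring M)).obj
          (ModuleCat.of Rring (M2k k))) ≃+
        LinearMap.ker (LinearMap.prod
          ((Ve ^ k) • (LinearMap.id : M →ₗ[Rring] M))
          (Qe • (LinearMap.id : M →ₗ[Rring] M)))) := by
  have hf := injective_toSpanSingleton_Ve_pow_Qe k
  have hN := (LinearMap.span_singleton_eq_range Rring (Rring × Rring) (Ve ^ k, Qe)).symm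
  refine ⟨fun n hn => ?_, ⟨?_⟩⟩
  · obtain ⟨n, rfl⟩ := Nat.exists_eq_add_of_le' hn
    exact subsingleton_tor_quotient_of_range_eq M hf hN n
  · exact ((torOneQuotientEquivKerLTensor M hf hN).trans
      (LinearMap.kerLTensorToSpanSingletonEquiv M _ _)).toAddEquiv

/-- For `k ≥ 1` and any `R`-module `M`: `Torₙ^R(M, M_{2k}) = 0` for all `n ≥ 2`,
and `Tor₁^R(M, M_{2k})` is isomorphic, as an `F`-vector space, to the submodule
`{x ∈ M : V^k·x = 0 and Q·x = 0}` of `M`. -/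
theorem stmt15 (k : ℕ) (hk : 1 ≤ k) (M : Type) [AddCommGroup M] [Module Rring M] :
    (∀ n : ℕ, 2 ≤ n →
      Subsingleton
        (((Tor (ModuleCat Rring) n).obj (ModuleCat.of Rring M)).obj
          (ModuleCat.of Rring (M2k k)))) ∧
    Nonempty
      ((((Tor (ModuleCat Rring) 1).obj (ModuleCat.of Rring M)).obj
          (ModuleCat.of Rring (M2k k))) ≃+
        LinearMap.ker (LinearMap.prod
          ((Ve ^ k) • (LinearMap.id : M →ₗ[Rring] M))
          (Qe • (LinearMap.id : M →ₗ[Rring] M)))) :=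
  stmt15_general k M
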